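/- arXiv:2006.11220 — 6 statements merged into one kernel-verified Lean document; each statement's English description precedes it below -/
import Mathlib

section
/- Let ĝ : ℝ → ℝ be a spectral filter, let i ≠ n be vertices, and set K_{in} := d_G(i,n) − 1 (assuming i and n are connected by a path). Then for every polynomial p̂ of degree at most K_{in}, the value of the atom T_i g at vertex n satisfies |(T_i g)(n)| ≤ max_{λ ∈ σ(L)} |ĝ(λ) − p̂(λ)|; consequently |(T_i g)(n)| is bounded by the infimum of this quantity over all polynomials of degree at most K_{in}. -/
open Matrix

/-- The combinatorial graph Laplacian `L = D - W`. -/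
noncomputable def graphLaplacian {N : ℕ} (W : Matrix (Fin N) (Fin N) ℝ) :
    Matrix (Fin N) (Fin N) ℝ :=
  Matrix.diagonal (fun m => ∑ m', W m m') - W

/-- `ĝ(L) = U ĝ(Λ) Uᵀ`, given the eigendecomposition data `U`, `lam`. -/
noncomputable def filterMatrix {N : ℕ} (U : Matrix (Fin N) (Fin N) ℝ) (lam : Fin N → ℝ)
    (g : ℝ → ℝ) : Matrix (Fin N) (Fin N) ℝ :=
  U * Matrix.diagonal (fun ℓ => g (lam ℓ)) * U.transpose

/-- The localized atom `T_i g = ĝ(L) δ_i`. -/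
noncomputable def atom {N : ℕ} (U : Matrix (Fin N) (Fin N) ℝ) (lam : Fin N → ℝ)
    (g : ℝ → ℝ) (i : Fin N) : Fin N → ℝ :=
  (filterMatrix U lam g).mulVec (Pi.single i 1)

/-- If a matrix is supported on the (loopy) adjacency of `G`, a nonzero entry of `M ^ k`
yields a walk of length at most `k`. -/
lemma walk_of_pow_ne_zero {N : ℕ} (G : SimpleGraph (Fin N)) (M : Matrix (Fin N) (Fin N) ℝ)
    (h : ∀ a b : Fin N, a ≠ b → ¬ G.Adj a b → M a b = 0) :
    ∀ (k : ℕ) (a b : Fin N), (M ^ k) a b ≠ 0 → ∃ w : G.Walk a b, w.length ≤ k := by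
  intro k
  induction k with
  | zero =>
    intro a b hab
    have hab' : a = b := by
      by_contra hne
      simp [Matrix.one_apply_ne hne] at hab
    subst hab'
    exact ⟨SimpleGraph.Walk.nil, by simp⟩
  | succ k ih =>
    intro a b hab
    rw [pow_succ', Matrix.mul_apply] at hab
    obtain ⟨c, -, hc⟩ := Finset.exists_ne_zero_of_sum_ne_zero hab
    have h1 : M a c ≠ 0 := fun h0 => hc (by simp [h0])
    have h2 : (M ^ k) c b ≠ 0 := fun h0 => hc (by simp [h0])
    obtain ⟨w, hw⟩ := ih c b h2
    by_cases hac : a = c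
    · subst hac; exact ⟨w, hw.trans (Nat.le_succ k)⟩
    · have hadj : G.Adj a c := by
        by_contra hn; exact h1 (h a c hac hn)
      exact ⟨SimpleGraph.Walk.cons hadj w, by simpa using Nat.succ_le_succ hw⟩

lemma UdiagUt_apply {N : ℕ} (U : Matrix (Fin N) (Fin N) ℝ) (f : Fin N → ℝ) (a b : Fin N) :
    (U * Matrix.diagonal f * U.transpose) a b = ∑ ℓ, U a ℓ * f ℓ * U b ℓ := by
  simp only [Matrix.mul_apply, Matrix.diagonal_apply, Matrix.transpose_apply, mul_ite,
    mul_zero, ite_mul, zero_mul, Finset.sum_ite_eq, Finset.sum_ite_eq', Finset.mem_univ,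
    if_true]

lemma pow_eig {N : ℕ} (L U : Matrix (Fin N) (Fin N) ℝ) (lam : Fin N → ℝ)
    (hU : U * U.transpose = 1) (hL : L = U * Matrix.diagonal lam * U.transpose) (k : ℕ) :
    L ^ k = U * Matrix.diagonal (fun ℓ => lam ℓ ^ k) * U.transpose := by
  have hUt : U.transpose * U = 1 := mul_eq_one_comm.mp hU
  induction k with
  | zero => simpa using hU.symm
  | succ k ih =>
    rw [pow_succ, ih, hL]
    have key : (U * Matrix.diagonal (fun ℓ => lam ℓ ^ k) * U.transpose) *
        (U * Matrix.diagonal lam * U.transpose)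
        = U * (Matrix.diagonal (fun ℓ => lam ℓ ^ k) * Matrix.diagonal lam) * U.transpose := by
      rw [show (U * Matrix.diagonal (fun ℓ => lam ℓ ^ k) * U.transpose) *
          (U * Matrix.diagonal lam * U.transpose)
          = U * (Matrix.diagonal (fun ℓ => lam ℓ ^ k) *
            ((U.transpose * U) * (Matrix.diagonal lam * U.transpose))) by
        simp only [Matrix.mul_assoc]]
      rw [hUt, Matrix.one_mul]
      simp only [← Matrix.mul_assoc]
    rw [key, Matrix.diagonal_mul_diagonal]
    have hfun : (fun ℓ => lam ℓ ^ k * lam ℓ) = fun ℓ => lam ℓ ^ (k + 1) := by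
      funext ℓ; rw [pow_succ]
    rw [hfun]


/-- Let `ĝ : ℝ → ℝ` be a spectral filter, let `i ≠ n` be vertices connected
by a path, and set `K_{in} := d_G(i,n) − 1`.  Then for every polynomial `p̂` of degree at most
`K_{in}`, `|(T_i g)(n)| ≤ max_{λ ∈ σ(L)} |ĝ(λ) − p̂(λ)|`; consequently `|(T_i g)(n)|` is
bounded by the infimum of this quantity over all polynomials of degree at most `K_{in}`. -/
theorem atomDecayPolynomialBound (N : ℕ) (W : Matrix (Fin N) (Fin N) ℝ)
    (hWsymm : W.IsSymm) (hWnn : ∀ m n, 0 ≤ W m n) (hWdiag : ∀ m, W m m = 0)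
    (U : Matrix (Fin N) (Fin N) ℝ) (lam : Fin N → ℝ)
    (hU : U * U.transpose = 1)
    (hL : graphLaplacian W = U * Matrix.diagonal lam * U.transpose)
    (g : ℝ → ℝ)
    (G : SimpleGraph (Fin N))
    (hG : ∀ m n : Fin N, G.Adj m n ↔ m ≠ n ∧ 0 < W m n)
    (i n : Fin N) (hin : i ≠ n) (hreach : G.Reachable i n) :
    (∀ p : Polynomial ℝ, p.natDegree ≤ G.dist i n - 1 →
      |atom U lam g i n| ≤
        Finset.univ.sup' ⟨i, Finset.mem_univ i⟩
          (fun ℓ => |g (lam ℓ) - p.eval (lam ℓ)|)) ∧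
    |atom U lam g i n| ≤
      ⨅ p : {q : Polynomial ℝ // q.natDegree ≤ G.dist i n - 1},
        Finset.univ.sup' ⟨i, Finset.mem_univ i⟩
          (fun ℓ => |g (lam ℓ) - (p : Polynomial ℝ).eval (lam ℓ)|) := by
  have hd : 1 ≤ G.dist i n := hreach.pos_dist_of_ne hin
  have hsupp : ∀ a b : Fin N, a ≠ b → ¬ G.Adj a b → graphLaplacian W a b = 0 := by
    intro a b hab hnadj
    have hW : W a b = 0 := by
      by_contra h
      exact hnadj ((hG a b).mpr ⟨hab, lt_of_le_of_ne (hWnn a b) (Ne.symm h)⟩)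
    simp [graphLaplacian, Matrix.sub_apply, Matrix.diagonal_apply_ne _ hab, hW]
  have hLk : ∀ k : ℕ, k < G.dist i n → ((graphLaplacian W) ^ k) n i = 0 := by
    intro k hk
    by_contra h0
    obtain ⟨w, hw⟩ := walk_of_pow_ne_zero G (graphLaplacian W) hsupp k n i h0
    have hdist : G.dist n i ≤ k := le_trans (SimpleGraph.dist_le w) hw
    rw [SimpleGraph.dist_comm] at hdist
    omega
  have hrow : ∀ a : Fin N, ∑ ℓ, U a ℓ * U a ℓ = 1 := by
    intro a
    have := congrArg (fun A => A a a) hU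
    simpa [Matrix.mul_apply, Matrix.one_apply, Matrix.transpose_apply] using this
  have hCS : (∑ ℓ, |U n ℓ| * |U i ℓ|) ≤ 1 := by
    have h2 := Finset.sum_mul_sq_le_sq_mul_sq Finset.univ (fun ℓ => |U n ℓ|) (fun ℓ => |U i ℓ|)
    have ha : ∑ ℓ, |U n ℓ| ^ 2 = 1 := by
      simpa [sq_abs, sq] using hrow n
    have hb : ∑ ℓ, |U i ℓ| ^ 2 = 1 := by
      simpa [sq_abs, sq] using hrow i
    rw [ha, hb, mul_one] at h2
    have hS : 0 ≤ ∑ ℓ, |U n ℓ| * |U i ℓ| :=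
      Finset.sum_nonneg fun ℓ _ => mul_nonneg (abs_nonneg _) (abs_nonneg _)
    nlinarith
  have key : ∀ p : Polynomial ℝ, p.natDegree ≤ G.dist i n - 1 →
      |atom U lam g i n| ≤
        Finset.univ.sup' ⟨i, Finset.mem_univ i⟩
          (fun ℓ => |g (lam ℓ) - p.eval (lam ℓ)|) := by
    intro p hp
    have hatom : atom U lam g i n = ∑ ℓ, U n ℓ * g (lam ℓ) * U i ℓ := by
      have h1 : atom U lam g i n = filterMatrix U lam g n i := by
        simp [atom, Matrix.mulVec_single]
      rw [h1, filterMatrix, UdiagUt_apply]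
    have hzero : ∑ ℓ, U n ℓ * p.eval (lam ℓ) * U i ℓ = 0 := by
      have hwr : ∀ ℓ : Fin N, U n ℓ * p.eval (lam ℓ) * U i ℓ
          = ∑ k ∈ Finset.range (p.natDegree + 1),
              U n ℓ * (p.coeff k * lam ℓ ^ k) * U i ℓ := by
        intro ℓ
        rw [Polynomial.eval_eq_sum_range (lam ℓ), Finset.mul_sum, Finset.sum_mul]
      rw [Finset.sum_congr rfl (fun ℓ _ => hwr ℓ), Finset.sum_comm]
      apply Finset.sum_eq_zero
      intro k hk
      have hkd : k < G.dist i n := by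
        have := Finset.mem_range.mp hk
        omega
      have hL0 : ((graphLaplacian W) ^ k) n i = 0 := hLk k hkd
      rw [pow_eig (graphLaplacian W) U lam hU hL k, UdiagUt_apply] at hL0
      calc ∑ ℓ, U n ℓ * (p.coeff k * lam ℓ ^ k) * U i ℓ
          = p.coeff k * ∑ ℓ, U n ℓ * lam ℓ ^ k * U i ℓ := by
            rw [Finset.mul_sum]
            exact Finset.sum_congr rfl fun ℓ _ => by ring
        _ = 0 := by rw [hL0, mul_zero]
    have hrep : atom U lam g i n = ∑ ℓ, U n ℓ * (g (lam ℓ) - p.eval (lam ℓ)) * U i ℓ := by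
      rw [hatom]
      rw [show (∑ ℓ, U n ℓ * (g (lam ℓ) - p.eval (lam ℓ)) * U i ℓ)
          = (∑ ℓ, U n ℓ * g (lam ℓ) * U i ℓ) - ∑ ℓ, U n ℓ * p.eval (lam ℓ) * U i ℓ by
        rw [← Finset.sum_sub_distrib]
        exact Finset.sum_congr rfl fun ℓ _ => by ring]
      rw [hzero, sub_zero]
    set M := Finset.univ.sup' ⟨i, Finset.mem_univ i⟩
        (fun ℓ => |g (lam ℓ) - p.eval (lam ℓ)|) with hMdef
    have hMle : ∀ ℓ : Fin N, |g (lam ℓ) - p.eval (lam ℓ)| ≤ M :=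
      fun ℓ => Finset.le_sup' (fun ℓ => |g (lam ℓ) - p.eval (lam ℓ)|) (Finset.mem_univ ℓ)
    have hM0 : 0 ≤ M := le_trans (abs_nonneg _) (hMle i)
    rw [hrep]
    calc |∑ ℓ, U n ℓ * (g (lam ℓ) - p.eval (lam ℓ)) * U i ℓ|
        ≤ ∑ ℓ, |U n ℓ * (g (lam ℓ) - p.eval (lam ℓ)) * U i ℓ| :=
          Finset.abs_sum_le_sum_abs _ _
      _ ≤ ∑ ℓ, |U n ℓ| * M * |U i ℓ| := by
          apply Finset.sum_le_sum
          intro ℓ _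
          rw [abs_mul, abs_mul]
          exact mul_le_mul_of_nonneg_right
            (mul_le_mul_of_nonneg_left (hMle ℓ) (abs_nonneg _)) (abs_nonneg _)
      _ = M * ∑ ℓ, |U n ℓ| * |U i ℓ| := by
          rw [Finset.mul_sum]
          exact Finset.sum_congr rfl fun ℓ _ => by ring
      _ ≤ M * 1 := mul_le_mul_of_nonneg_left hCS hM0
      _ = M := mul_one M
  refine ⟨key, ?_⟩
  haveI : Nonempty {q : Polynomial ℝ // q.natDegree ≤ G.dist i n - 1} :=
    ⟨⟨0, by simp⟩⟩
  exact le_ciInf fun p => key p p.2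
end

section
/- Let ĝ_1, …, ĝ_J : ℝ → ℝ be spectral filters and define G(λ) := Σ_{j=1}^{J} |ĝ_j(λ)|². If G(λ) > 0 for all λ ∈ σ(L), then the dictionary 𝒟 = {T_i g_j : 1 ≤ j ≤ J, 1 ≤ i ≤ N} satisfies the frame condition A‖f‖₂² ≤ Σ_{j=1}^{J} Σ_{i=1}^{N} |⟨f, T_i g_j⟩|² ≤ B‖f‖₂² for all f ∈ ℝ^N, with frame bounds A = min_{λ ∈ σ(L)} G(λ) and B = max_{λ ∈ σ(L)} G(λ). In particular, if G is constant on σ(L), the dictionary is a tight frame with A = B. -/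
open Matrix

lemma orth_sum_sq {N : ℕ} (U : Matrix (Fin N) (Fin N) ℝ)
    (hUtU : U.transpose * U = 1) (v : Fin N → ℝ) :
    ∑ i, (U.mulVec v i) ^ 2 = ∑ ℓ, (v ℓ) ^ 2 := by
  have h : (U.mulVec v) ⬝ᵥ (U.mulVec v) = v ⬝ᵥ v := by
    rw [Matrix.dotProduct_mulVec, ← Matrix.mulVec_transpose,
      Matrix.mulVec_mulVec, hUtU, Matrix.one_mulVec]
  simpa [dotProduct, sq] using h

lemma atom_inner {N : ℕ} (U : Matrix (Fin N) (Fin N) ℝ) (lam : Fin N → ℝ)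
    (g : ℝ → ℝ) (f : Fin N → ℝ) (i : Fin N) :
    f ⬝ᵥ atom U lam g i
      = U.mulVec (fun ℓ => (U.transpose.mulVec f) ℓ * g (lam ℓ)) i := by
  unfold atom filterMatrix
  rw [Matrix.dotProduct_mulVec]
  have : f ᵥ* (U * Matrix.diagonal (fun ℓ => g (lam ℓ)) * U.transpose)
      = U.mulVec (fun ℓ => (U.transpose.mulVec f) ℓ * g (lam ℓ)) := by
    rw [← Matrix.vecMul_vecMul, ← Matrix.vecMul_vecMul,
      Matrix.vecMul_transpose, ← Matrix.mulVec_transpose U f]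
    have hd : (U.transpose.mulVec f) ᵥ* Matrix.diagonal (fun ℓ => g (lam ℓ))
        = fun ℓ => (U.transpose.mulVec f) ℓ * g (lam ℓ) :=
      funext fun ℓ => Matrix.vecMul_diagonal _ _ _
    rw [hd]
  rw [this, dotProduct_single, mul_one]

/-- Let `ĝ_1, …, ĝ_J` be spectral filters and `G(λ) := Σ_j |ĝ_j(λ)|²`.
If `G(λ) > 0` for all `λ ∈ σ(L)`, then the dictionary `{T_i g_j}` satisfies the frame
condition `A‖f‖₂² ≤ Σ_j Σ_i |⟨f, T_i g_j⟩|² ≤ B‖f‖₂²` for all `f ∈ ℝ^N`, with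
`A = min_{λ ∈ σ(L)} G(λ)` and `B = max_{λ ∈ σ(L)} G(λ)`.  In particular, if `G` is constant
on `σ(L)` then `A = B` (tight frame). -/
theorem lsgfdFrameBounds (N : ℕ) (hN : 0 < N) (W : Matrix (Fin N) (Fin N) ℝ)
    (hWsymm : W.IsSymm) (hWnn : ∀ m n, 0 ≤ W m n) (hWdiag : ∀ m, W m m = 0)
    (U : Matrix (Fin N) (Fin N) ℝ) (lam : Fin N → ℝ)
    (hU : U * U.transpose = 1)
    (hL : graphLaplacian W = U * Matrix.diagonal lam * U.transpose)
    (J : ℕ) (g : Fin J → ℝ → ℝ)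
    (hpos : ∀ ℓ : Fin N, 0 < ∑ j, (g j (lam ℓ)) ^ 2)
    (A B : ℝ)
    (hA : A = Finset.univ.inf' ⟨⟨0, hN⟩, Finset.mem_univ _⟩
      (fun ℓ : Fin N => ∑ j, (g j (lam ℓ)) ^ 2))
    (hB : B = Finset.univ.sup' ⟨⟨0, hN⟩, Finset.mem_univ _⟩
      (fun ℓ : Fin N => ∑ j, (g j (lam ℓ)) ^ 2)) :
    (∀ f : Fin N → ℝ,
      A * ∑ m, (f m) ^ 2 ≤ ∑ j, ∑ i, (f ⬝ᵥ atom U lam (g j) i) ^ 2 ∧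
      ∑ j, ∑ i, (f ⬝ᵥ atom U lam (g j) i) ^ 2 ≤ B * ∑ m, (f m) ^ 2) ∧
    ((∀ ℓ ℓ' : Fin N, ∑ j, (g j (lam ℓ)) ^ 2 = ∑ j, (g j (lam ℓ')) ^ 2) → A = B) := by
  have hUtU : U.transpose * U = 1 := mul_eq_one_comm.mp hU
  constructor
  · intro f
    set c := U.transpose.mulVec f with hc
    have hnorm : ∑ m, (f m) ^ 2 = ∑ ℓ, (c ℓ) ^ 2 := by
      have := orth_sum_sq U.transpose (by simpa using hU) f
      simpa [hc] using this.symm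
    have hsum : ∀ j : Fin J, ∑ i, (f ⬝ᵥ atom U lam (g j) i) ^ 2
        = ∑ ℓ, (g j (lam ℓ)) ^ 2 * (c ℓ) ^ 2 := by
      intro j
      have h1 : ∀ i, f ⬝ᵥ atom U lam (g j) i
          = U.mulVec (fun ℓ => c ℓ * g j (lam ℓ)) i := fun i => atom_inner U lam (g j) f i
      calc ∑ i, (f ⬝ᵥ atom U lam (g j) i) ^ 2
          = ∑ i, (U.mulVec (fun ℓ => c ℓ * g j (lam ℓ)) i) ^ 2 := by
            simp only [h1]
        _ = ∑ ℓ, (c ℓ * g j (lam ℓ)) ^ 2 := orth_sum_sq U hUtU _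
        _ = ∑ ℓ, (g j (lam ℓ)) ^ 2 * (c ℓ) ^ 2 := by
            apply Finset.sum_congr rfl; intro ℓ _; ring
    have htotal : ∑ j, ∑ i, (f ⬝ᵥ atom U lam (g j) i) ^ 2
        = ∑ ℓ, (∑ j, (g j (lam ℓ)) ^ 2) * (c ℓ) ^ 2 := by
      rw [Finset.sum_congr rfl (fun j _ => hsum j), Finset.sum_comm]
      exact Finset.sum_congr rfl fun ℓ _ => (Finset.sum_mul _ _ _).symm
    refine ⟨?_, ?_⟩
    · rw [hnorm, htotal, Finset.mul_sum]
      refine Finset.sum_le_sum fun ℓ _ => ?_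
      exact mul_le_mul_of_nonneg_right
        (hA ▸ Finset.inf'_le (fun ℓ : Fin N => ∑ j, (g j (lam ℓ)) ^ 2)
          (Finset.mem_univ ℓ)) (sq_nonneg _)
    · rw [hnorm, htotal, Finset.mul_sum]
      refine Finset.sum_le_sum fun ℓ _ => ?_
      exact mul_le_mul_of_nonneg_right
        (hB ▸ Finset.le_sup' (fun ℓ : Fin N => ∑ j, (g j (lam ℓ)) ^ 2)
          (Finset.mem_univ ℓ)) (sq_nonneg _)
  · intro hconst
    subst hA hB
    apply le_antisymm
    · exact le_trans
        (Finset.inf'_le (fun ℓ : Fin N => ∑ j, (g j (lam ℓ)) ^ 2)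
          (Finset.mem_univ (⟨0, hN⟩ : Fin N)))
        (Finset.le_sup' (fun ℓ : Fin N => ∑ j, (g j (lam ℓ)) ^ 2)
          (Finset.mem_univ (⟨0, hN⟩ : Fin N)))
    · refine Finset.sup'_le _ _ fun ℓ _ => Finset.le_inf' _ _ fun ℓ' _ => ?_
      exact le_of_eq (hconst ℓ ℓ')
end

section
/- Let ĝ_1, …, ĝ_J : ℝ → ℝ be spectral filters satisfying Σ_{j=1}^{J} |ĝ_j(λ)|² = 1 for every λ ∈ σ(L). Then the dictionary {T_i g_j : 1 ≤ j ≤ J, 1 ≤ i ≤ N} is a Parseval frame: for every f ∈ ℝ^N, Σ_{j=1}^{J} Σ_{i=1}^{N} |⟨f, T_i g_j⟩|² = ‖f‖₂². -/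
open Matrix

/-- If the spectral filters satisfy `Σ_j |ĝ_j(λ)|² = 1` for every
`λ ∈ σ(L)`, then the dictionary `{T_i g_j}` is a Parseval frame:
`Σ_j Σ_i |⟨f, T_i g_j⟩|² = ‖f‖₂²` for every `f ∈ ℝ^N`. -/
theorem lsgfdParsevalFrame (N : ℕ) (W : Matrix (Fin N) (Fin N) ℝ)
    (hWsymm : W.IsSymm) (hWnn : ∀ m n, 0 ≤ W m n) (hWdiag : ∀ m, W m m = 0)
    (U : Matrix (Fin N) (Fin N) ℝ) (lam : Fin N → ℝ)
    (hU : U * U.transpose = 1)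
    (hL : graphLaplacian W = U * Matrix.diagonal lam * U.transpose)
    (J : ℕ) (g : Fin J → ℝ → ℝ)
    (hG : ∀ ℓ : Fin N, ∑ j, (g j (lam ℓ)) ^ 2 = 1) :
    ∀ f : Fin N → ℝ,
      ∑ j, ∑ i, (f ⬝ᵥ atom U lam (g j) i) ^ 2 = ∑ m, (f m) ^ 2 := by
  intro f
  have hU' : U.transpose * U = 1 := mul_eq_one_comm.mp hU
  -- generic: if Aᵀ * A = 1 then mulVec A preserves sum of squares
  have key : ∀ (A : Matrix (Fin N) (Fin N) ℝ), A.transpose * A = 1 →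
      ∀ x : Fin N → ℝ, ∑ i, (A.mulVec x i) ^ 2 = ∑ ℓ, (x ℓ) ^ 2 := by
    intro A hA x
    have h1 : ∑ i, (A.mulVec x i) ^ 2 = A.mulVec x ⬝ᵥ A.mulVec x := by
      simp [dotProduct, sq]
    have h2 : A.mulVec x ⬝ᵥ A.mulVec x = x ⬝ᵥ x := by
      rw [Matrix.dotProduct_mulVec, ← Matrix.vecMul_transpose, Matrix.vecMul_vecMul,
        hA, Matrix.vecMul_one]
    rw [h1, h2]
    simp [dotProduct, sq]
  have c := Matrix.vecMul f U
  have hatom : ∀ (j : Fin J) (i : Fin N),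
      f ⬝ᵥ atom U lam (g j) i
        = U.mulVec (fun ℓ => Matrix.vecMul f U ℓ * g j (lam ℓ)) i := by
    intro j i
    unfold atom filterMatrix
    rw [Matrix.dotProduct_mulVec, dotProduct_single, mul_one]
    have hinner : Matrix.vecMul f (U * Matrix.diagonal (fun ℓ => g j (lam ℓ)))
        = fun ℓ => Matrix.vecMul f U ℓ * g j (lam ℓ) := by
      funext ℓ
      rw [← Matrix.vecMul_vecMul, Matrix.vecMul_diagonal]
    have h3 : Matrix.vecMul f (U * Matrix.diagonal (fun ℓ => g j (lam ℓ)) * U.transpose)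
        = U.mulVec (fun ℓ => Matrix.vecMul f U ℓ * g j (lam ℓ)) := by
      rw [← Matrix.vecMul_vecMul, Matrix.vecMul_transpose, hinner]
    rw [h3]
  calc ∑ j, ∑ i, (f ⬝ᵥ atom U lam (g j) i) ^ 2
      = ∑ j, ∑ ℓ, (Matrix.vecMul f U ℓ * g j (lam ℓ)) ^ 2 := by
        refine Finset.sum_congr rfl fun j _ => ?_
        rw [show (∑ i, (f ⬝ᵥ atom U lam (g j) i) ^ 2)
            = ∑ i, (U.mulVec (fun ℓ => Matrix.vecMul f U ℓ * g j (lam ℓ)) i) ^ 2 from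
          Finset.sum_congr rfl fun i _ => by rw [hatom]]
        exact key U hU' _
    _ = ∑ ℓ, (Matrix.vecMul f U ℓ) ^ 2 := by
        rw [Finset.sum_comm]
        refine Finset.sum_congr rfl fun ℓ _ => ?_
        rw [show (∑ j, (Matrix.vecMul f U ℓ * g j (lam ℓ)) ^ 2)
            = (Matrix.vecMul f U ℓ) ^ 2 * ∑ j, (g j (lam ℓ)) ^ 2 by
          rw [Finset.mul_sum]; exact Finset.sum_congr rfl fun j _ => by ring]
        rw [hG ℓ, mul_one]
    _ = ∑ m, (f m) ^ 2 := by
        have : ∀ ℓ, Matrix.vecMul f U ℓ = U.transpose.mulVec f ℓ := by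
          intro ℓ; rw [← Matrix.mulVec_transpose]
        rw [Finset.sum_congr rfl fun ℓ _ => by rw [this ℓ]]
        rw [key U.transpose (by rw [Matrix.transpose_transpose]; exact hU) f]
end

section
/- Let ĝ_1, …, ĝ_J : ℝ → ℝ be spectral filters such that for every λ ∈ σ(L): Σ_{j=1}^{J} |ĝ_j(λ)|² = 1 and ĝ_j(λ) ĝ_{j'}(λ) = 0 for all j ≠ j', with each ĝ_j taking values in {0,1} on σ(L) (i.e., the filters form an ideal partition of the spectrum, each eigenvalue lying in the support of exactly one filter). Then there exists a partition {V₁, …, V_J} of the vertex set {1,…,N} with |V_j| = #{ℓ : ĝ_j(λ_ℓ) = 1} for each j, such that the dictionary {T_i g_j : 1 ≤ j ≤ J, i ∈ V_j} is a basis of ℝ^N; moreover each atom in this basis is orthogonal to every atom generated from a different filter. -/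
/-!
Write every row of `U` as the sum over `j` of its restriction to the spectral band
`{ℓ | ĝ_j(λ_ℓ) = 1}` and expand `det U ≠ 0` multilinearly in the rows: some assignment `r` of
vertices to bands leaves a nonsingular matrix `B` with rows `B_i = (ĝ_{r i}(λ_ℓ) U_{iℓ})_ℓ`.
Since `T_i g_{r i} = U B_i`, these `N` atoms form a basis, and we take `V_j = r⁻¹(j)`. A nonzero
term of the Leibniz expansion of `det B` is a permutation sending each band onto a fibre of `r`,
which gives `|V_j|`. Atoms of different filters are orthogonal since
`ĝ_j(L) ĝ_{j'}(L) = (ĝ_j ĝ_{j'})(L) = 0`.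
-/

open Matrix

namespace Matrix

variable {n κ R : Type*} [Fintype n] [DecidableEq n] [CommRing R]

theorem det_eq_sum_det_of_sum_masks_eq_one [Fintype κ] (A : Matrix n n R) (m : κ → n → R)
    (hm : ∀ ℓ, ∑ k, m k ℓ = 1) :
    A.det = ∑ r : n → κ, (of fun i ℓ => m (r i) ℓ * A i ℓ).det := by
  classical
  have hrows : A = fun i => ∑ k, fun ℓ => m k ℓ * A i ℓ := by
    ext i ℓ
    simp [← Finset.sum_mul, hm]
  conv_lhs => rw [hrows]
  exact detRowAlternating.map_sum (fun i k ℓ => m k ℓ * A i ℓ)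

theorem card_fiber_eq_of_det_ne_zero {B : Matrix n n R} (hB : B.det ≠ 0) {r φ : n → κ}
    (hsupp : ∀ i ℓ, B i ℓ ≠ 0 → r i = φ ℓ) (k : κ) :
    Nat.card {i // r i = k} = Nat.card {ℓ // φ ℓ = k} := by
  obtain ⟨σ, -, hσ⟩ := Finset.exists_ne_zero_of_sum_ne_zero (B.det_apply ▸ hB)
  have hφ : ∀ ℓ, φ ℓ = r (σ ℓ) := fun ℓ =>
    (hsupp _ _ fun h => hσ (by
      rw [Finset.prod_eq_zero (f := fun i => B (σ i) i) (Finset.mem_univ ℓ) h, smul_zero])).symm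
  exact Nat.card_congr (σ.subtypeEquiv fun ℓ => by rw [hφ]).symm

end Matrix

theorem exists_eq_single_of_sum_sq_eq_one {κ R : Type*} [Fintype κ] [DecidableEq κ]
    [Semiring R] [Nontrivial R] {x : κ → R} (hsum : ∑ j, x j ^ 2 = 1)
    (hdisj : ∀ j j', j ≠ j' → x j * x j' = 0) (h01 : ∀ j, x j = 0 ∨ x j = 1) :
    ∃ k, x = Pi.single k 1 := by
  obtain ⟨k, -, hk⟩ := Finset.exists_ne_zero_of_sum_ne_zero (hsum ▸ one_ne_zero)
  have hk1 : x k = 1 := (h01 k).resolve_left fun h => hk (by rw [h, sq, zero_mul])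
  refine ⟨k, funext fun j => ?_⟩
  rcases eq_or_ne j k with rfl | hjk
  · simp [hk1]
  · simpa [hjk, hk1] using hdisj j k hjk

theorem Equiv.exists_sigma_fiber_comp {ι κ M : Type*} [Fintype ι] [DecidableEq κ]
    (F : κ → ι → M) (r : ι → κ) :
    ∃ e : (Σ k, {i // i ∈ Finset.univ.filter (r · = k)}) ≃ ι,
      (fun p => F p.1 p.2.1) = (fun i => F (r i) i) ∘ e := by
  refine ⟨(Equiv.sigmaCongrRight fun k => Equiv.subtypeEquivRight fun i => by simp).trans
    (Equiv.sigmaFiberEquiv r), funext fun ⟨k, i, hi⟩ => ?_⟩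
  obtain rfl : r i = k := by simpa using hi
  rfl

section Filters

variable {N : ℕ} {U : Matrix (Fin N) (Fin N) ℝ} {lam : Fin N → ℝ}

theorem filterMatrix_transpose (f : ℝ → ℝ) :
    (filterMatrix U lam f)ᵀ = filterMatrix U lam f := by
  simp [filterMatrix, transpose_mul, Matrix.mul_assoc]

theorem filterMatrix_mul (hU : Uᵀ * U = 1) (f h : ℝ → ℝ) :
    filterMatrix U lam f * filterMatrix U lam h = filterMatrix U lam (f * h) := by
  simp only [filterMatrix, Matrix.mul_assoc, ← Matrix.mul_assoc Uᵀ U, hU, Matrix.one_mul]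
  simp [← Matrix.mul_assoc, diagonal_mul_diagonal]

theorem filterMatrix_eq_zero {f : ℝ → ℝ}
    (hf : ∀ ℓ, f (lam ℓ) = 0) : filterMatrix U lam f = 0 := by
  simp [filterMatrix, hf]

theorem atom_dotProduct_atom (hU : Uᵀ * U = 1) (f h : ℝ → ℝ) (i i' : Fin N) :
    atom U lam f i ⬝ᵥ atom U lam h i' = filterMatrix U lam (f * h) i i' := by
  rw [atom, atom, dotProduct_mulVec, ← vecMul_transpose, filterMatrix_transpose, vecMul_vecMul,
    filterMatrix_mul hU]
  simp

theorem atom_eq_mulVec (f : ℝ → ℝ) (i : Fin N) :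
    atom U lam f i = U *ᵥ fun ℓ => f (lam ℓ) * U i ℓ := by
  rw [atom, filterMatrix, ← mulVec_mulVec, ← mulVec_mulVec, mulVec_single_one]
  congr 1
  ext ℓ
  simp [mulVec_diagonal]

theorem linearIndependent_atom_of_det_ne_zero (hU : U.det ≠ 0) (F : Fin N → ℝ → ℝ)
    (hF : (of fun i ℓ => F i (lam ℓ) * U i ℓ).det ≠ 0) :
    LinearIndependent ℝ fun i => atom U lam (F i) i := by
  have hrows : (fun i => atom U lam (F i) i) =
      fun i => (of (fun i ℓ => F i (lam ℓ) * U i ℓ) * Uᵀ) i := by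
    ext i ℓ'
    simp [atom_eq_mulVec, mul_apply, mulVec, dotProduct, mul_comm]
  rw [hrows]
  exact linearIndependent_rows_of_det_ne_zero (by simp [det_mul, hF, hU])

end Filters

theorem criticallySampledIdealBasis_general (N : ℕ)
    (U : Matrix (Fin N) (Fin N) ℝ) (lam : Fin N → ℝ)
    (hU : U * U.transpose = 1)
    (J : ℕ) (g : Fin J → ℝ → ℝ)
    (hsum : ∀ ℓ : Fin N, ∑ j, (g j (lam ℓ)) ^ 2 = 1)
    (hdisjoint : ∀ ℓ : Fin N, ∀ j j' : Fin J, j ≠ j' → g j (lam ℓ) * g j' (lam ℓ) = 0)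
    (hideal : ∀ (j : Fin J) (ℓ : Fin N), g j (lam ℓ) = 0 ∨ g j (lam ℓ) = 1) :
    ∃ V : Fin J → Finset (Fin N),
      (∀ j j' : Fin J, j ≠ j' → Disjoint (V j) (V j')) ∧
      (Finset.univ.biUnion V = Finset.univ) ∧
      (∀ j, (V j).card = Nat.card {ℓ : Fin N // g j (lam ℓ) = 1}) ∧
      LinearIndependent ℝ
        (fun p : (Σ j : Fin J, {i : Fin N // i ∈ V j}) => atom U lam (g p.1) p.2.1) ∧
      Submodule.span ℝ
        (Set.range (fun p : (Σ j : Fin J, {i : Fin N // i ∈ V j}) =>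
          atom U lam (g p.1) p.2.1)) = ⊤ ∧
      (∀ j j' : Fin J, j ≠ j' → ∀ i ∈ V j, ∀ i' ∈ V j',
        atom U lam (g j) i ⬝ᵥ atom U lam (g j') i' = 0) := by
  choose φ hφ using fun ℓ =>
    exists_eq_single_of_sum_sq_eq_one (hsum ℓ) (hdisjoint ℓ) (hideal · ℓ)
  have hg : ∀ j ℓ, g j (lam ℓ) = if j = φ ℓ then 1 else 0 := fun j ℓ => by
    simpa [Pi.single_apply] using congr_fun (hφ ℓ) j
  have hUdet : U.det ≠ 0 := det_ne_zero_of_right_inverse hU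
  obtain ⟨r, -, hr⟩ := Finset.exists_ne_zero_of_sum_ne_zero <|
    det_eq_sum_det_of_sum_masks_eq_one U (fun j ℓ => g j (lam ℓ)) (by simp [hg]) ▸ hUdet
  have hsupp : ∀ i ℓ, g (r i) (lam ℓ) * U i ℓ ≠ 0 → r i = φ ℓ := fun i ℓ h => by
    by_contra hne
    simp [hg, hne] at h
  have hli := linearIndependent_atom_of_det_ne_zero hUdet (fun i => g (r i)) hr
  obtain ⟨e, he⟩ := Equiv.exists_sigma_fiber_comp (fun j i => atom U lam (g j) i) r
  refine ⟨fun j => Finset.univ.filter (r · = j), ?_, ?_, fun j => ?_, ?_, ?_, ?_⟩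
  · exact fun j j' hne => Finset.disjoint_filter.mpr fun i _ h h' => hne (h.symm.trans h')
  · ext i
    simp
  · rw [← Fintype.card_subtype, ← Nat.card_eq_fintype_card, card_fiber_eq_of_det_ne_zero hr hsupp]
    exact Nat.card_congr (Equiv.subtypeEquivRight fun ℓ => by simp [hg, eq_comm])
  · exact he ▸ (linearIndependent_equiv e).mpr hli
  · rw [he, EquivLike.range_comp]
    exact hli.span_eq_top_of_card_eq_finrank' (by simp)
  · intro j j' hne i _ i' _
    rw [atom_dotProduct_atom (mul_eq_one_comm.mp hU), filterMatrix_eq_zero (hdisjoint · j j' hne)]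
    rfl

/-- Suppose the filters `ĝ_1, …, ĝ_J` form an ideal partition of the
spectrum: at every `λ ∈ σ(L)` they take values in `{0,1}`, are pairwise disjoint, and their
squares sum to `1`.  Then there exists a partition `{V₁, …, V_J}` of the vertex set with
`|V_j| = #{ℓ : ĝ_j(λ_ℓ) = 1}` such that the dictionary `{T_i g_j : j, i ∈ V_j}` is a basis
of `ℝ^N`, and each atom is orthogonal to every atom generated from a different filter. -/
theorem criticallySampledIdealBasis (N : ℕ) (W : Matrix (Fin N) (Fin N) ℝ)
    (hWsymm : W.IsSymm) (hWnn : ∀ m n, 0 ≤ W m n) (hWdiag : ∀ m, W m m = 0)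
    (U : Matrix (Fin N) (Fin N) ℝ) (lam : Fin N → ℝ)
    (hU : U * U.transpose = 1)
    (hL : graphLaplacian W = U * Matrix.diagonal lam * U.transpose)
    (J : ℕ) (g : Fin J → ℝ → ℝ)
    (hsum : ∀ ℓ : Fin N, ∑ j, (g j (lam ℓ)) ^ 2 = 1)
    (hdisjoint : ∀ ℓ : Fin N, ∀ j j' : Fin J, j ≠ j' → g j (lam ℓ) * g j' (lam ℓ) = 0)
    (hideal : ∀ (j : Fin J) (ℓ : Fin N), g j (lam ℓ) = 0 ∨ g j (lam ℓ) = 1) :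
    ∃ V : Fin J → Finset (Fin N),
      (∀ j j' : Fin J, j ≠ j' → Disjoint (V j) (V j')) ∧
      (Finset.univ.biUnion V = Finset.univ) ∧
      (∀ j, (V j).card = Nat.card {ℓ : Fin N // g j (lam ℓ) = 1}) ∧
      LinearIndependent ℝ
        (fun p : (Σ j : Fin J, {i : Fin N // i ∈ V j}) => atom U lam (g p.1) p.2.1) ∧
      Submodule.span ℝ
        (Set.range (fun p : (Σ j : Fin J, {i : Fin N // i ∈ V j}) =>
          atom U lam (g p.1) p.2.1)) = ⊤ ∧
      (∀ j j' : Fin J, j ≠ j' → ∀ i ∈ V j, ∀ i' ∈ V j',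
        atom U lam (g j) i ⬝ᵥ atom U lam (g j') i' = 0) :=
  criticallySampledIdealBasis_general N U lam hU J g hsum hdisjoint hideal
end

section
/- Let p̂_1, …, p̂_J : ℝ → ℝ be spectral filters, let G̃(λ) := Σ_{j=1}^{J} |p̂_j(λ)|², let A := min_{λ ∈ σ(L)} G̃(λ) and B := max_{λ ∈ σ(L)} G̃(λ), and assume A > 0. Set r := B/A − 1. Then for every f ∈ ℝ^N, the approximate reconstruction f_rec := (2/(A+B)) Σ_{j=1}^{J} p̂_j(L)² f satisfies ‖f − f_rec‖₂² ≤ (r/(2+r))² ‖f‖₂². -/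
open Matrix

lemma mulVec_sq_sum {N : ℕ} (U : Matrix (Fin N) (Fin N) ℝ)
    (hUtU : U.transpose * U = 1) (v : Fin N → ℝ) :
    ∑ m, (U.mulVec v m) ^ 2 = ∑ ℓ, (v ℓ) ^ 2 := by
  have h : ∀ ℓ ℓ', ∑ m, U m ℓ * U m ℓ' = (1 : Matrix (Fin N) (Fin N) ℝ) ℓ ℓ' := by
    intro ℓ ℓ'
    rw [← hUtU]
    simp [Matrix.mul_apply, Matrix.transpose_apply]
  calc ∑ m, (U.mulVec v m) ^ 2
      = ∑ m, ∑ ℓ, ∑ ℓ', (U m ℓ * v ℓ) * (U m ℓ' * v ℓ') := by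
        simp [Matrix.mulVec, dotProduct, sq, Finset.sum_mul_sum]
    _ = ∑ ℓ, ∑ ℓ', (v ℓ * v ℓ') * ∑ m, U m ℓ * U m ℓ' := by
        rw [Finset.sum_comm]
        refine Finset.sum_congr rfl fun ℓ _ => ?_
        rw [Finset.sum_comm]
        refine Finset.sum_congr rfl fun ℓ' _ => ?_
        rw [Finset.mul_sum]
        refine Finset.sum_congr rfl fun m _ => by ring
    _ = ∑ ℓ, (v ℓ) ^ 2 := by
        simp only [h]
        simp [Matrix.one_apply, Finset.sum_ite_eq, sq]
/-- Let `G̃(λ) := Σ_j |p̂_j(λ)|²`, `A := min_{σ(L)} G̃`,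
`B := max_{σ(L)} G̃`, `A > 0`, and `r := B/A − 1`.  Then for every `f`, the approximate
reconstruction `f_rec := (2/(A+B)) Σ_j p̂_j(L)² f` satisfies
`‖f − f_rec‖₂² ≤ (r/(2+r))² ‖f‖₂²`. -/
theorem reconstructionErrorFrameBound (N : ℕ) (hN : 0 < N)
    (W : Matrix (Fin N) (Fin N) ℝ)
    (hWsymm : W.IsSymm) (hWnn : ∀ m n, 0 ≤ W m n) (hWdiag : ∀ m, W m m = 0)
    (U : Matrix (Fin N) (Fin N) ℝ) (lam : Fin N → ℝ)
    (hU : U * U.transpose = 1)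
    (hL : graphLaplacian W = U * Matrix.diagonal lam * U.transpose)
    (J : ℕ) (p : Fin J → ℝ → ℝ)
    (A B r : ℝ)
    (hA : A = Finset.univ.inf' ⟨⟨0, hN⟩, Finset.mem_univ _⟩
      (fun ℓ : Fin N => ∑ j, (p j (lam ℓ)) ^ 2))
    (hB : B = Finset.univ.sup' ⟨⟨0, hN⟩, Finset.mem_univ _⟩
      (fun ℓ : Fin N => ∑ j, (p j (lam ℓ)) ^ 2))
    (hApos : 0 < A)
    (hr : r = B / A - 1) :
    ∀ f : Fin N → ℝ,
      ∑ m, (f m - ((2 / (A + B)) • (∑ j, (filterMatrix U lam (p j)) ^ 2).mulVec f) m) ^ 2 ≤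
        (r / (2 + r)) ^ 2 * ∑ m, (f m) ^ 2 := by
  intro f
  have hUtU : U.transpose * U = 1 := mul_eq_one_comm.mp hU
  set G : Fin N → ℝ := fun ℓ => ∑ j, (p j (lam ℓ)) ^ 2 with hG
  set c : ℝ := 2 / (A + B) with hc
  -- basic order facts
  have hGA : ∀ ℓ, A ≤ G ℓ := fun ℓ => hA ▸ Finset.inf'_le _ (Finset.mem_univ ℓ)
  have hGB : ∀ ℓ, G ℓ ≤ B := fun ℓ => hB ▸ Finset.le_sup' _ (Finset.mem_univ ℓ)
  have hAB : A ≤ B := le_trans (hGA ⟨0, hN⟩) (hGB ⟨0, hN⟩)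
  have hABpos : 0 < A + B := by linarith
  have hcAB : c * (A + B) = 2 := by rw [hc]; field_simp
  -- the matrix identity
  have hM : (∑ j, (filterMatrix U lam (p j)) ^ 2)
      = U * Matrix.diagonal G * U.transpose := by
    have h1 : ∀ j, (filterMatrix U lam (p j)) ^ 2
        = U * Matrix.diagonal (fun ℓ => (p j (lam ℓ)) ^ 2) * U.transpose := by
      intro j
      simp only [filterMatrix, sq, Matrix.mul_assoc]
      rw [← Matrix.mul_assoc U.transpose U, hUtU, Matrix.one_mul,
        ← Matrix.mul_assoc (Matrix.diagonal _) (Matrix.diagonal _),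
        Matrix.diagonal_mul_diagonal]
    rw [Finset.sum_congr rfl (fun j _ => h1 j), ← Finset.sum_mul, ← Finset.mul_sum]
    congr 2
    ext i k
    by_cases h : i = k <;> simp [Matrix.sum_apply, Matrix.diagonal_apply, h, hG]
  -- change coordinates
  set g : Fin N → ℝ := U.transpose.mulVec f with hg
  have hfg : U.mulVec g = f := by
    rw [hg, Matrix.mulVec_mulVec, hU, Matrix.one_mulVec]
  have hrec : (fun m => f m - (c • (∑ j, (filterMatrix U lam (p j)) ^ 2).mulVec f) m)
      = U.mulVec (fun ℓ => (1 - c * G ℓ) * g ℓ) := by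
    have h2 : (fun ℓ => (1 - c * G ℓ) * g ℓ) = g - c • (fun ℓ => G ℓ * g ℓ) := by
      funext ℓ
      simp only [Pi.sub_apply, Pi.smul_apply, smul_eq_mul]
      ring
    have h3 : (∑ j, (filterMatrix U lam (p j)) ^ 2).mulVec f
        = U.mulVec (fun ℓ => G ℓ * g ℓ) := by
      have e1 : U.mulVec ((Matrix.diagonal G).mulVec (U.transpose.mulVec f))
          = (U * Matrix.diagonal G * U.transpose).mulVec f := by
        rw [Matrix.mulVec_mulVec, Matrix.mulVec_mulVec]
      have e2 : (Matrix.diagonal G).mulVec (U.transpose.mulVec f)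
          = fun ℓ => G ℓ * g ℓ := by
        funext ℓ
        simp [Matrix.mulVec_diagonal, hg]
      rw [hM, ← e1, e2]
    rw [h2, Matrix.mulVec_sub, Matrix.mulVec_smul, hfg, h3]
    funext m
    simp
  have hrec' : ∀ m, (f m - (c • (∑ j, (filterMatrix U lam (p j)) ^ 2).mulVec f) m) ^ 2
      = (U.mulVec (fun ℓ => (1 - c * G ℓ) * g ℓ) m) ^ 2 := fun m => by
    rw [← congrFun hrec m]
  rw [Finset.sum_congr rfl fun m _ => hrec' m, mulVec_sq_sum U hUtU]
  have hf2 : ∑ m, (f m) ^ 2 = ∑ ℓ, (g ℓ) ^ 2 := by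
    rw [← hfg, mulVec_sq_sum U hUtU]
  rw [hf2, Finset.mul_sum]
  -- the key coefficient bound
  have hk : r / (2 + r) = (B - A) / (A + B) := by
    rw [hr]
    have hAne : A ≠ 0 := ne_of_gt hApos
    have h1' : B / A - 1 = (B - A) / A := by field_simp
    have h2r : 2 + (B / A - 1) = (A + B) / A := by field_simp; ring
    rw [h2r, h1', div_div_div_eq]
    rw [div_eq_div_iff (by positivity : (A*(A+B):ℝ) ≠ 0) (ne_of_gt hABpos)]
    ring
  refine Finset.sum_le_sum fun ℓ _ => ?_
  rw [hk, mul_pow]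
  refine mul_le_mul_of_nonneg_right ?_ (sq_nonneg _)
  have hGc : c * G ℓ * (A + B) = 2 * G ℓ := by
    rw [mul_comm c (G ℓ), mul_assoc, hcAB]; ring
  have h1 : 1 - c * G ℓ ≤ (B - A) / (A + B) := by
    rw [le_div_iff₀ hABpos]
    nlinarith [hGA ℓ, hGc]
  have h2 : -((B - A) / (A + B)) ≤ 1 - c * G ℓ := by
    have hne : -((B - A) / (A + B)) = (A - B) / (A + B) := by ring
    rw [hne, div_le_iff₀ hABpos]
    nlinarith [hGB ℓ, hGc]
  exact sq_le_sq' h2 h1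
end

section
/- Let W be a symmetric N×N real matrix with nonnegative entries and zero diagonal, let d(n) = Σ_m W_{nm} be the weighted degree of vertex n, and let L = D − W be the graph Laplacian, where D = diag(d(1),…,d(N)). Assume the edge set E = {(m,n) : m ≠ n, W_{mn} > 0} is nonempty. Then every eigenvalue λ of L satisfies λ ≤ max_{(m,n) ∈ E} (d(m) + d(n)); in particular λ_max(L) ≤ max_{(m,n) ∈ E} (d(m) + d(n)). -/
open Matrix

/-- Every eigenvalue `λ` of the graph Laplacian `L = D − W` satisfies
`λ ≤ max_{(m,n) ∈ E} (d(m) + d(n))`, where `d(n) = Σ_m W n m` is the weighted degree and the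
maximum is over the (nonempty) edge set `E = {(m,n) : m ≠ n, W m n > 0}`. -/
theorem laplacianEigenvalueDegreeBound (N : ℕ) (W : Matrix (Fin N) (Fin N) ℝ)
    (hWsymm : W.IsSymm) (hWnn : ∀ m n, 0 ≤ W m n) (hWdiag : ∀ m, W m m = 0)
    (hE : (Finset.univ.filter
      (fun e : Fin N × Fin N => e.1 ≠ e.2 ∧ 0 < W e.1 e.2)).Nonempty)
    (lam : ℝ) (v : Fin N → ℝ) (hv : v ≠ 0)
    (heig : (graphLaplacian W).mulVec v = lam • v) :
    lam ≤ (Finset.univ.filter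
        (fun e : Fin N × Fin N => e.1 ≠ e.2 ∧ 0 < W e.1 e.2)).sup' hE
      (fun e => (∑ m', W e.1 m') + ∑ m', W e.2 m') := by
  classical
  set d : Fin N → ℝ := fun n => ∑ m', W n m' with hd_def
  have hd : ∀ n, 0 ≤ d n := fun n => Finset.sum_nonneg fun m _ => hWnn n m
  -- the eigenvalue equation componentwise
  have h1 : ∀ n, lam * v n = d n * v n - ∑ m, W n m * v m := by
    intro n
    have := congrFun heig n
    rw [graphLaplacian, sub_mulVec] at this
    simp only [Pi.sub_apply, Pi.smul_apply, smul_eq_mul, mulVec, dotProduct,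
      diagonal_apply, ite_mul, zero_mul, Finset.sum_ite_eq, Finset.mem_univ,
      if_true] at this
    linarith [this]
  -- absolute-value inequality
  have habs : ∀ n, (lam - d n) * |v n| ≤ ∑ m, W n m * |v m| := by
    intro n
    calc (lam - d n) * |v n|
        ≤ |lam - d n| * |v n| :=
          mul_le_mul_of_nonneg_right (le_abs_self _) (abs_nonneg _)
      _ = |(lam - d n) * v n| := (abs_mul _ _).symm
      _ = |∑ m, W n m * v m| := by
          have : (lam - d n) * v n = -(∑ m, W n m * v m) := by
            have := h1 n; ring_nf; ring_nf at this; linarith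
          rw [this, abs_neg]
      _ ≤ ∑ m, |W n m * v m| := Finset.abs_sum_le_sum_abs _ _
      _ = ∑ m, W n m * |v m| := by
          refine Finset.sum_congr rfl fun m _ => ?_
          rw [abs_mul, abs_of_nonneg (hWnn n m)]
  -- pick u maximizing |v u|
  obtain ⟨n₀, hn₀⟩ := Function.ne_iff.mp hv
  obtain ⟨u, -, hu⟩ := Finset.exists_max_image Finset.univ (fun n => |v n|)
    ⟨n₀, Finset.mem_univ _⟩
  have hu' : ∀ m, |v m| ≤ |v u| := fun m => hu m (Finset.mem_univ m)
  have hvu : 0 < |v u| := lt_of_lt_of_le (abs_pos.mpr hn₀) (hu' n₀)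
  by_cases hdu : d u = 0
  · -- u is isolated: lam = 0
    have hW0 : ∀ m, W u m = 0 := by
      intro m
      have := (Finset.sum_eq_zero_iff_of_nonneg (fun m _ => hWnn u m)).mp hdu
      exact this m (Finset.mem_univ m)
    have hlam : lam * v u = 0 := by
      rw [h1 u, hdu]
      simp [hW0]
    have hlam0 : lam = 0 := by
      rcases mul_eq_zero.mp hlam with h | h
      · exact h
      · exact absurd h (abs_pos.mp hvu)
    obtain ⟨e, he⟩ := hE
    refine le_trans ?_ (Finset.le_sup' _ he)
    rw [hlam0]
    exact add_nonneg (hd e.1) (hd e.2)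
  · -- u has a neighbor; pick w maximizing |v w| among neighbors of u
    have hdu' : 0 < d u := lt_of_le_of_ne (hd u) (Ne.symm hdu)
    have hSne : (Finset.univ.filter (fun m => 0 < W u m)).Nonempty := by
      by_contra h
      apply hdu
      rw [Finset.not_nonempty_iff_eq_empty, Finset.filter_eq_empty_iff] at h
      exact Finset.sum_eq_zero fun m _ => le_antisymm
        (not_lt.mp (h (Finset.mem_univ m))) (hWnn u m)
    obtain ⟨w, hwmem, hw⟩ := Finset.exists_max_image _ (fun n => |v n|) hSne
    have hWuw : 0 < W u w := (Finset.mem_filter.mp hwmem).2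
    have hw' : ∀ m, 0 < W u m → |v m| ≤ |v w| := fun m hm =>
      hw m (Finset.mem_filter.mpr ⟨Finset.mem_univ m, hm⟩)
    have hne : u ≠ w := by
      intro h
      rw [h] at hWuw
      exact absurd (hWdiag w) (ne_of_gt hWuw)
    have hedge : (u, w) ∈ Finset.univ.filter
        (fun e : Fin N × Fin N => e.1 ≠ e.2 ∧ 0 < W e.1 e.2) :=
      Finset.mem_filter.mpr ⟨Finset.mem_univ _, hne, hWuw⟩
    have hWwu : 0 < W w u := by
      have := congrFun (congrFun hWsymm.eq u) w
      simp only [transpose_apply] at this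
      rw [this]; exact hWuw
    have hdw : 0 < d w :=
      lt_of_lt_of_le hWwu (Finset.single_le_sum (fun m _ => hWnn w m) (Finset.mem_univ u))
    -- bound sums by degree times maxima
    have ineq1 : (lam - d u) * |v u| ≤ d u * |v w| := by
      refine le_trans (habs u) ?_
      rw [hd_def, Finset.sum_mul]
      refine Finset.sum_le_sum fun m _ => ?_
      rcases (hWnn u m).eq_or_lt with h | h
      · rw [← h]; simp
      · exact mul_le_mul_of_nonneg_left (hw' m h) h.le
    have ineq2 : (lam - d w) * |v w| ≤ d w * |v u| := by
      refine le_trans (habs w) ?_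
      rw [hd_def, Finset.sum_mul]
      exact Finset.sum_le_sum fun m _ => mul_le_mul_of_nonneg_left (hu' m) (hWnn w m)
    -- main bound
    have hmain : lam ≤ d u + d w := by
      by_contra hc
      push_neg at hc
      have hA : d w < lam - d u := by linarith
      have hB : d u < lam - d w := by linarith
      have hvw : 0 < |v w| := by
        rcases (abs_nonneg (v w)).eq_or_lt with h | h
        · exfalso
          have : (lam - d u) * |v u| ≤ 0 := by rw [← h] at ineq1; simpa using ineq1
          nlinarith
        · exact h
      nlinarith [mul_le_mul ineq1 ineq2
        (mul_nonneg (le_of_lt (by linarith : (0:ℝ) < lam - d w)) hvw.le)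
        (mul_nonneg hdu'.le hvw.le), mul_pos hvu hvw]
    exact le_trans hmain (Finset.le_sup' (fun e => (∑ m', W e.1 m') + ∑ m', W e.2 m') hedge)
end
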